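/- arXiv:1209.2358 — 2 statements merged into one kernel-verified Lean document; each statement's English description precedes it below -/
import Mathlib

section
/- Any group homomorphism from PSL(2,Z) to a group G is uniquely determined by a pair of elements (x, y) in G with x² = 1 and y³ = 1; conversely every such pair determines a homomorphism. -/
open Matrix

instance : Fact (Even (Fintype.card (Fin 2))) := ⟨by simp⟩

/-- The subgroup `{I, -I}` of `SL(2,ℤ)`. -/
def plusMinusOne : Subgroup (SpecialLinearGroup (Fin 2) ℤ) :=
  Subgroup.zpowers (-1)

instance : plusMinusOne.Normal := by
  constructor
  intro x hx g
  obtain ⟨k, rfl⟩ := hx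
  have h : g * (-1 : SpecialLinearGroup (Fin 2) ℤ) ^ k * g⁻¹
      = (-1) ^ k := by
    have hc : Commute g ((-1 : SpecialLinearGroup (Fin 2) ℤ) ^ k) := by
      apply Commute.zpow_right
      ext i j
      simp [SpecialLinearGroup.coe_mul]
    rw [hc.eq, mul_assoc, mul_inv_cancel, mul_one]
  rw [h]
  exact ⟨k, rfl⟩

/-- The projective modular group `PSL(2,ℤ) = SL(2,ℤ)/{±I}`. -/
def PSL2Z : Type := SpecialLinearGroup (Fin 2) ℤ ⧸ plusMinusOne

noncomputable instance : Group PSL2Z := by unfold PSL2Z; infer_instance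

/-- `S = [[0,-1],[1,0]]` and `U = [[0,-1],[1,-1]]`, whose images generate
`PSL(2,ℤ)` with orders 2 and 3. -/
def Smat : SpecialLinearGroup (Fin 2) ℤ :=
  ⟨!![0, -1; 1, 0], by norm_num [Matrix.det_fin_two_of]⟩

def Umat : SpecialLinearGroup (Fin 2) ℤ :=
  ⟨!![0, -1; 1, -1], by norm_num [Matrix.det_fin_two_of]⟩

/-!
`PSL(2,ℤ)` is generated by the classes of `S` and `U = S T⁻¹`, of orders 2 and 3, so it is a
quotient of `ℤ/2 ∗ ℤ/3`. The quotient map is injective by the ping-pong lemma for the action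
on the upper half plane: `S` and `S⁻¹` (which act alike) send the right half `Re z > 0` into the
left half `Re z < 0`, while `U` and `U⁻¹` send the left half into the right half. Hence
`PSL(2,ℤ) ≅ ℤ/2 ∗ ℤ/3`, and a homomorphism out of it is just a pair `(x, y)` with `x² = 1`,
`y³ = 1`.
-/

open Matrix.SpecialLinearGroup ModularGroup Subgroup
open scoped MatrixGroups UpperHalfPlane Pointwise Function

section ZModLift

variable {G : Type*} [Group G] {n : ℕ}

def zmodLift (a : G) (ha : a ^ n = 1) : Multiplicative (ZMod n) →* G :=
  AddMonoidHom.toMultiplicativeLeft <| ZMod.lift n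
    ⟨zmultiplesHom _ (Additive.ofMul a), by simpa using congrArg Additive.ofMul ha⟩

lemma zmodLift_ofAdd_intCast (a : G) (ha : a ^ n = 1) (k : ℤ) :
    zmodLift a ha (.ofAdd k) = a ^ k := by
  change Additive.toMul (ZMod.lift n _ k) = _
  rw [ZMod.lift_coe]
  rfl

lemma zmodLift_ofAdd_one (a : G) (ha : a ^ n = 1) : zmodLift a ha (.ofAdd 1) = a := by
  simpa using zmodLift_ofAdd_intCast a ha 1

lemma zmodLift_ofAdd_neg_one (a : G) (ha : a ^ n = 1) :
    zmodLift a ha (.ofAdd (-1)) = a⁻¹ := by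
  simpa using zmodLift_ofAdd_intCast a ha (-1)

end ZModLift

section CyclicCoprod

variable {ι : Type*} {n : ι → ℕ} {P : Type*} [Group P] (g : ι → P) (hg : ∀ i, g i ^ n i = 1)

def cyclicCoprodLift : Monoid.CoprodI (fun i ↦ Multiplicative (ZMod (n i))) →* P :=
  Monoid.CoprodI.lift fun i ↦ zmodLift (g i) (hg i)

lemma cyclicCoprodLift_of_ofAdd_one (i : ι) :
    cyclicCoprodLift g hg (Monoid.CoprodI.of (i := i) (.ofAdd 1)) = g i := by
  rw [cyclicCoprodLift, Monoid.CoprodI.lift_of, zmodLift_ofAdd_one]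

variable {g}

lemma cyclicCoprodLift_surjective (hgen : Subgroup.closure (Set.range g) = ⊤) :
    Function.Surjective (cyclicCoprodLift g hg) := by
  rw [← MonoidHom.range_eq_top, eq_top_iff, ← hgen, closure_le]
  rintro _ ⟨i, rfl⟩
  exact ⟨_, cyclicCoprodLift_of_ofAdd_one g hg i⟩

theorem existsUnique_hom_apply_eq_of_injective (hinj : Function.Injective (cyclicCoprodLift g hg))
    (hgen : Subgroup.closure (Set.range g) = ⊤) {G : Type*} [Group G] (x : ι → G)
    (hx : ∀ i, x i ^ n i = 1) : ∃! φ : P →* G, ∀ i, φ (g i) = x i := by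
  let e := MulEquiv.ofBijective _ ⟨hinj, cyclicCoprodLift_surjective hg hgen⟩
  have he (i : ι) : e.symm (g i) = Monoid.CoprodI.of (.ofAdd 1) :=
    e.symm_apply_eq.2 (cyclicCoprodLift_of_ofAdd_one g hg i).symm
  have hφ₀ (i : ι) : (cyclicCoprodLift x hx).comp e.symm.toMonoidHom (g i) = x i := by
    simp only [MonoidHom.comp_apply, MulEquiv.coe_toMonoidHom, he, cyclicCoprodLift_of_ofAdd_one]
  refine ⟨_, hφ₀, fun φ hφ ↦ MonoidHom.eq_of_eqOn_dense hgen ?_⟩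
  rintro _ ⟨i, rfl⟩
  exact (hφ i).trans (hφ₀ i).symm

end CyclicCoprod

namespace ModularGroup

variable (z : ℍ)

lemma re_S_smul : (S • z).re = -z.re / Complex.normSq z := by
  rw [UpperHalfPlane.modular_S_smul, ← UpperHalfPlane.coe_re, UpperHalfPlane.coe_mk,
    Complex.inv_re, Complex.normSq_neg, Complex.neg_re, UpperHalfPlane.coe_re]

lemma re_S_smul_pos_iff : 0 < (S • z).re ↔ z.re < 0 := by
  rw [re_S_smul, div_pos_iff_of_pos_right (Complex.normSq_pos.2 z.ne_zero), neg_pos]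

lemma re_S_smul_neg_iff : (S • z).re < 0 ↔ 0 < z.re := by
  rw [re_S_smul, div_lt_iff₀ (Complex.normSq_pos.2 z.ne_zero), zero_mul, neg_lt_zero]

lemma S_inv_smul : S⁻¹ • z = S • z := by
  rw [S_inv, SL_neg_smul]

end ModularGroup

lemma Umat_eq_S_mul_T_inv : Umat = S * T⁻¹ := by decide

section UmatSmul

variable {z : ℍ}

lemma re_Umat_smul_pos (hz : z.re < 0) : 0 < (Umat • z).re := by
  rw [Umat_eq_S_mul_T_inv, mul_smul, re_S_smul_pos_iff, re_T_inv_smul]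
  linarith

lemma re_Umat_inv_smul_pos (hz : z.re < 0) : 0 < (Umat⁻¹ • z).re := by
  rw [Umat_eq_S_mul_T_inv, _root_.mul_inv_rev, inv_inv, mul_smul, re_T_smul, S_inv_smul]
  linarith [(re_S_smul_pos_iff z).2 hz]

end UmatSmul

namespace PSL2Z

noncomputable def mk : SL(2, ℤ) →* PSL2Z := QuotientGroup.mk' plusMinusOne

lemma mk_eq_one_iff (g : SL(2, ℤ)) : mk g = 1 ↔ g ∈ plusMinusOne := QuotientGroup.eq_one_iff g

noncomputable def action : PSL2Z →* Equiv.Perm ℍ :=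
  QuotientGroup.lift plusMinusOne (MulAction.toPermHom SL(2, ℤ) ℍ) <| by
    rw [plusMinusOne, zpowers_le, MonoidHom.mem_ker]
    exact Equiv.ext fun z ↦ (SL_neg_smul 1 z).trans (one_smul _ z)

lemma action_mk (g : SL(2, ℤ)) (z : ℍ) : action (mk g) z = g • z := rfl

def genOrder : Bool → ℕ := fun b ↦ cond b 2 3

noncomputable def gen : Bool → PSL2Z := fun b ↦ mk (cond b S Umat)

lemma gen_pow_genOrder : ∀ b, gen b ^ genOrder b = 1 := by
  rintro (_ | _) <;> simp only [gen, genOrder, cond_true, cond_false, ← map_pow]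
  · rw [show Umat ^ 3 = 1 by decide, map_one]
  · rw [mk_eq_one_iff, show S ^ 2 = -1 by decide]
    exact mem_zpowers _

lemma closure_range_gen : Subgroup.closure (Set.range gen) = ⊤ := by
  have hSL : Subgroup.closure (Set.range fun b ↦ cond b S Umat) = ⊤ := by
    rw [eq_top_iff, ← SpecialLinearGroup.SL2Z_generators, closure_le]
    rintro _ (rfl | rfl)
    · exact subset_closure ⟨true, rfl⟩
    · rw [show T = Umat⁻¹ * S by rw [Umat_eq_S_mul_T_inv]; group]
      exact mul_mem (inv_mem (subset_closure ⟨false, rfl⟩)) (subset_closure ⟨true, rfl⟩)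
  change Subgroup.closure (Set.range (mk ∘ fun b ↦ cond b S Umat)) = ⊤
  rw [Set.range_comp, ← MonoidHom.map_closure, hSL]
  exact map_top_of_surjective mk (QuotientGroup.mk'_surjective _)

def pingPongSet : Bool → Set ℍ := fun b ↦ cond b {z | z.re < 0} {z | 0 < z.re}

lemma pingPongSet_nonempty : ∀ b, (pingPongSet b).Nonempty := by
  rintro (_ | _)
  · refine ⟨T • UpperHalfPlane.I, show 0 < (T • UpperHalfPlane.I).re from ?_⟩
    rw [re_T_smul, UpperHalfPlane.I_re]
    norm_num
  · refine ⟨T⁻¹ • UpperHalfPlane.I, show (T⁻¹ • UpperHalfPlane.I).re < 0 from ?_⟩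
    rw [re_T_inv_smul, UpperHalfPlane.I_re]
    norm_num

lemma pairwise_disjoint_pingPongSet : Pairwise (Disjoint on pingPongSet) :=
  pairwise_disjoint_on_bool.2 <|
    Set.disjoint_left.2 fun z (h₁ : z.re < 0) (h₂ : 0 < z.re) ↦ lt_asymm h₁ h₂

lemma action_gen_mem_pingPongSet {i j : Bool} (hij : i ≠ j) {z : ℍ} (hz : z ∈ pingPongSet j) :
    action (gen i) z ∈ pingPongSet i ∧ action (gen i)⁻¹ z ∈ pingPongSet i := by
  rw [gen, ← map_inv, action_mk, action_mk]
  cases i <;> cases j <;> simp only [ne_eq, not_true_eq_false] at hij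
  · exact ⟨re_Umat_smul_pos hz, re_Umat_inv_smul_pos hz⟩
  · rw [cond_true, S_inv_smul, and_self]
    exact (re_S_smul_neg_iff z).2 hz

lemma eq_one_or_eq_neg_one_of_ne_zero :
    ∀ b (k : ZMod (genOrder b)), k ≠ 0 → k = 1 ∨ k = -1 := by
  rintro (_ | _)
  · exact (by decide : ∀ k : ZMod 3, k ≠ 0 → k = 1 ∨ k = -1)
  · exact (by decide : ∀ k : ZMod 2, k ≠ 0 → k = 1 ∨ k = -1)

lemma injective_cyclicCoprodLift_gen :
    Function.Injective (cyclicCoprodLift gen gen_pow_genOrder) := by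
  have hcomp : action.comp (cyclicCoprodLift gen gen_pow_genOrder) =
      Monoid.CoprodI.lift fun i ↦ action.comp (zmodLift (gen i) (gen_pow_genOrder i)) :=
    Monoid.CoprodI.ext_hom _ _ fun i ↦ by ext; simp [cyclicCoprodLift]
  refine .of_comp (f := action) ?_
  rw [← MonoidHom.coe_comp, hcomp]
  refine Monoid.CoprodI.lift_injective_of_ping_pong _ (Or.inr ⟨false, by simp [genOrder]⟩)
    pingPongSet pingPongSet_nonempty pairwise_disjoint_pingPongSet ?_
  intro i j hij h hh
  refine Set.smul_set_subset_iff.2 fun z hz ↦ ?_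
  rcases eq_one_or_eq_neg_one_of_ne_zero i h.toAdd hh with hk | hk <;>
    rw [← ofAdd_toAdd h, hk, MonoidHom.comp_apply]
  · rw [zmodLift_ofAdd_one]
    exact (action_gen_mem_pingPongSet hij hz).1
  · rw [zmodLift_ofAdd_neg_one]
    exact (action_gen_mem_pingPongSet hij hz).2

end PSL2Z

/-- A homomorphism out of `PSL(2,ℤ)` is uniquely determined by the images
`x, y` of (the classes of) `S` and `U`, subject only to `x² = 1` and `y³ = 1`;
conversely any such pair determines a homomorphism. -/
theorem psl2z_hom_classification {G : Type} [Group G] (x y : G)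
    (hx : x ^ 2 = 1) (hy : y ^ 3 = 1) :
    ∃! φ : PSL2Z →* G,
      φ (QuotientGroup.mk Smat) = x ∧ φ (QuotientGroup.mk Umat) = y := by
  have hxy : ∀ b, cond b x y ^ PSL2Z.genOrder b = 1 := by rintro (_ | _) <;> assumption
  obtain ⟨φ, hφ, huniq⟩ := existsUnique_hom_apply_eq_of_injective PSL2Z.gen_pow_genOrder
    PSL2Z.injective_cyclicCoprodLift_gen PSL2Z.closure_range_gen _ hxy
  exact ⟨φ, ⟨hφ true, hφ false⟩, fun ψ hψ ↦ huniq ψ (Bool.forall_bool.2 ⟨hψ.2, hψ.1⟩)⟩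
end

section
/- In the group ⟨a, b | a² = 1, b³ = 1⟩ (≅ PSL(2,Z)), the element ab has infinite order. -/
/-!
Map the presented group to `PSL(2, ℤ)` by `a ↦ ±S`, `b ↦ ±S⁻¹T`, which is legitimate since
`S² = -1` is central and `(S⁻¹T)³ = 1`. Then `ab ↦ ±T`, and `±Tᵏ` is trivial only for `k = 0`,
because `Tᵏ = !![1, k; 0, 1]` is scalar only then.
-/

/-- Relations `a² = 1`, `b³ = 1` presenting `PSL(2,ℤ) ≅ ℤ/2 * ℤ/3`. -/
def modRels : Set (FreeGroup (Fin 2)) :=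
  {FreeGroup.of 0 ^ 2, FreeGroup.of 1 ^ 3}

open scoped MatrixGroups

lemma Matrix.SpecialLinearGroup.neg_one_mem_center {n R : Type*} [DecidableEq n] [Fintype n]
    [CommRing R] [Fact (Even (Fintype.card n))] :
    (-1 : SpecialLinearGroup n R) ∈ Subgroup.center (SpecialLinearGroup n R) :=
  Subgroup.mem_center_iff.mpr fun g ↦ by simp

namespace ModularGroup

lemma S_sq : S ^ 2 = -1 := by decide

lemma S_inv_mul_T_pow_three : (S⁻¹ * T) ^ 3 = 1 := by decide

lemma T_zpow_mem_center_iff {n : ℤ} : T ^ n ∈ Subgroup.center SL(2, ℤ) ↔ n = 0 := by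
  refine ⟨fun h ↦ ?_, fun h ↦ h ▸ Subgroup.one_mem _⟩
  obtain ⟨r, -, hr⟩ := Matrix.SpecialLinearGroup.mem_center_iff.mp h
  simpa [coe_T_zpow, Matrix.intCast_apply] using congr($hr 0 1).symm

end ModularGroup

section modRelsLift

variable {G : Type*} [Group G] {x y : G} (hx : x ^ 2 = 1) (hy : y ^ 3 = 1)

def modRelsLift : PresentedGroup modRels →* G :=
  PresentedGroup.toGroup (f := ![x, y]) (by rintro r (rfl | rfl) <;> simpa)

@[simp]
lemma modRelsLift_of_zero : modRelsLift hx hy (PresentedGroup.of 0) = x :=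
  PresentedGroup.toGroup.of _

@[simp]
lemma modRelsLift_of_one : modRelsLift hx hy (PresentedGroup.of 1) = y :=
  PresentedGroup.toGroup.of _

end modRelsLift

open ModularGroup QuotientGroup in
/-- In `⟨a, b | a² = 1, b³ = 1⟩` the element `ab` has infinite order. -/
theorem ab_infinite_order :
    ∀ k : ℕ, 0 < k →
      (PresentedGroup.of 0 * PresentedGroup.of 1 : PresentedGroup modRels) ^ k ≠ 1 := by
  intro k hk h
  have hS : (S : PSL(2, ℤ)) ^ 2 = 1 := by
    rw [← mk_pow, eq_one_iff, S_sq]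
    exact Matrix.SpecialLinearGroup.neg_one_mem_center
  have hST : ((S⁻¹ * T : SL(2, ℤ)) : PSL(2, ℤ)) ^ 3 = 1 := by
    rw [← mk_pow, S_inv_mul_T_pow_three, mk_one]
  have hT : (T : PSL(2, ℤ)) ^ k = 1 := by
    simpa [← mk_mul] using congr(modRelsLift hS hST $h)
  rw [← mk_pow, eq_one_iff, ← zpow_natCast, T_zpow_mem_center_iff] at hT
  omega
end
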